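/- Let B = kQ'/⟨ρ'⟩ where Q' has vertices I, II, III and arrows δ: I→II, γ: II→I, η: II→III, θ: III→I, with relations ρ' = {γδγ, ηγ, δγδ − θη, γθ}. Then B has k-dimension 10. -/

import Mathlib

noncomputable section

variable (k : Type) [Field k]

/-- Generators of the path algebra of the quiver `Q'`:
`X 0, X 1, X 2` are the trivial paths at the vertices `I, II, III`, and
`X 3, X 4, X 5, X 6` are the arrows `δ : I → II`, `γ : II → I`, `η : II → III`,
`θ : III → I`. -/
def gen' (i : Fin 7) : FreeAlgebra k (Fin 7) := FreeAlgebra.ι k i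

/-- The defining relations of `B = kQ'/⟨ρ'⟩`: orthogonal idempotent relations for the
trivial paths, the sum of the trivial paths is `1`, source/target relations for the four
arrows, and the relations `ρ' = {γδγ, ηγ, δγδ − θη, γθ}` (the last one imposed as
`δγδ = θη`). -/
def pathRel' : FreeAlgebra k (Fin 7) → FreeAlgebra k (Fin 7) → Prop := fun x y =>
  (x, y) ∈ ([
    (gen' k 0 * gen' k 0, gen' k 0), (gen' k 0 * gen' k 1, 0), (gen' k 0 * gen' k 2, 0),
    (gen' k 1 * gen' k 0, 0), (gen' k 1 * gen' k 1, gen' k 1), (gen' k 1 * gen' k 2, 0),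
    (gen' k 2 * gen' k 0, 0), (gen' k 2 * gen' k 1, 0), (gen' k 2 * gen' k 2, gen' k 2),
    (gen' k 0 + gen' k 1 + gen' k 2, 1),
    (gen' k 3, gen' k 0 * gen' k 3 * gen' k 1),
    (gen' k 4, gen' k 1 * gen' k 4 * gen' k 0),
    (gen' k 5, gen' k 2 * gen' k 5 * gen' k 1),
    (gen' k 6, gen' k 0 * gen' k 6 * gen' k 2),
    (gen' k 4 * gen' k 3 * gen' k 4, 0),
    (gen' k 5 * gen' k 4, 0),
    (gen' k 3 * gen' k 4 * gen' k 3, gen' k 6 * gen' k 5),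
    (gen' k 4 * gen' k 6, 0)] :
      List (FreeAlgebra k (Fin 7) × FreeAlgebra k (Fin 7)))

/-- The algebra `B = kQ'/⟨ρ'⟩` of Example 4.6. -/
def pathAlg' : Type := RingQuot (pathRel' k)

instance : Ring (pathAlg' k) := inferInstanceAs (Ring (RingQuot (pathRel' k)))
instance : Algebra k (pathAlg' k) := inferInstanceAs (Algebra k (RingQuot (pathRel' k)))

namespace Stmt13

def MZ : Fin 7 → Matrix (Fin 10) (Fin 10) ℤ
  | 0 => Matrix.of fun i j => if i = j ∧ (i = 0 ∨ i = 3 ∨ i = 6 ∨ i = 7 ∨ i = 9) then 1 else 0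
  | 1 => Matrix.of fun i j => if i = j ∧ (i = 1 ∨ i = 4 ∨ i = 8) then 1 else 0
  | 2 => Matrix.of fun i j => if i = j ∧ (i = 2 ∨ i = 5) then 1 else 0
  | 3 => Matrix.of fun i j => if (i,j) = (3,1) ∨ (i,j) = (7,4) ∨ (i,j) = (9,8) then 1 else 0
  | 4 => Matrix.of fun i j => if (i,j) = (4,0) ∨ (i,j) = (8,3) then 1 else 0
  | 5 => Matrix.of fun i j => if (i,j) = (5,1) then 1 else 0
  | 6 => Matrix.of fun i j => if (i,j) = (6,2) ∨ (i,j) = (9,5) then 1 else 0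

abbrev castHom : Matrix (Fin 10) (Fin 10) ℤ →+* Matrix (Fin 10) (Fin 10) k :=
  (Int.castRingHom k).mapMatrix

def gens : Fin 7 → Matrix (Fin 10) (Fin 10) k := fun i => castHom k (MZ i)

def F : FreeAlgebra k (Fin 7) →ₐ[k] Matrix (Fin 10) (Fin 10) k :=
  FreeAlgebra.lift k (gens k)

lemma hrel : ∀ ⦃x y⦄, pathRel' k x y → F k x = F k y := by
  intro x y h
  simp only [pathRel', List.mem_cons, List.not_mem_nil, or_false, Prod.mk.injEq] at h
  obtain ⟨rfl,rfl⟩|⟨rfl,rfl⟩|⟨rfl,rfl⟩|⟨rfl,rfl⟩|⟨rfl,rfl⟩|⟨rfl,rfl⟩|⟨rfl,rfl⟩|⟨rfl,rfl⟩|⟨rfl,rfl⟩|⟨rfl,rfl⟩|⟨rfl,rfl⟩|⟨rfl,rfl⟩|⟨rfl,rfl⟩|⟨rfl,rfl⟩|⟨rfl,rfl⟩|⟨rfl,rfl⟩|⟨rfl,rfl⟩|⟨rfl,rfl⟩ := h <;>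
  simp only [F, gen', map_mul, map_add, map_one, map_zero, FreeAlgebra.lift_ι_apply, gens] <;>
  simp only [← map_mul, ← map_add] <;>
  first
    | exact congrArg _ (by decide)
    | (rw [← map_zero (castHom k)]; exact congrArg _ (by decide))
    | (rw [← map_one (castHom k)]; exact congrArg _ (by decide))


def mk : FreeAlgebra k (Fin 7) →ₐ[k] pathAlg' k := RingQuot.mkAlgHom k (pathRel' k)

abbrev E (i : Fin 7) : pathAlg' k := mk k (gen' k i)

lemma R (x y : FreeAlgebra k (Fin 7)) (h : pathRel' k x y) : mk k x = mk k y :=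
  RingQuot.mkAlgHom_rel k h

section helpers
variable {A : Type*} [Ring A]

lemma absL {e f x : A} (he : e * e = e) (h : x = e * x * f) : e * x = x := by
  conv_lhs => rw [h]
  rw [← mul_assoc, ← mul_assoc, he, ← h]

lemma absR {e f x : A} (hf : f * f = f) (h : x = e * x * f) : x * f = x := by
  conv_lhs => rw [h]
  rw [mul_assoc, hf, ← h]

lemma zeroL {e f g x : A} (hge : g * e = 0) (h : x = e * x * f) : g * x = 0 := by
  conv_lhs => rw [h]
  rw [← mul_assoc, ← mul_assoc, hge, zero_mul, zero_mul]

lemma zeroR {e f g x : A} (hfg : f * g = 0) (h : x = e * x * f) : x * g = 0 := by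
  conv_lhs => rw [h]
  rw [mul_assoc, hfg, mul_zero]

lemma zeroMM {x y e f : A} (hx : x * f = x) (hy : e * y = y) (hfe : f * e = 0) : x * y = 0 := by
  rw [← hx, ← hy, mul_assoc, ← mul_assoc f, hfe, zero_mul, mul_zero]

lemma extm {a b c : A} (h : a * b = c) (x : A) : a * (b * x) = c * x := by
  rw [← mul_assoc, h]

lemma extm0 {a b : A} (h : a * b = 0) (x : A) : a * (b * x) = 0 := by
  rw [← mul_assoc, h, zero_mul]

end helpers
lemma e00 : E k 0 * E k 0 = E k 0 := by
  simpa only [map_mul, map_zero] using R k (gen' k 0 * gen' k 0) (gen' k 0) (by simp [pathRel'])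
lemma e01 : E k 0 * E k 1 = 0 := by
  simpa only [map_mul, map_zero] using R k (gen' k 0 * gen' k 1) (0) (by simp [pathRel'])
lemma e02 : E k 0 * E k 2 = 0 := by
  simpa only [map_mul, map_zero] using R k (gen' k 0 * gen' k 2) (0) (by simp [pathRel'])
lemma e10 : E k 1 * E k 0 = 0 := by
  simpa only [map_mul, map_zero] using R k (gen' k 1 * gen' k 0) (0) (by simp [pathRel'])
lemma e11 : E k 1 * E k 1 = E k 1 := by
  simpa only [map_mul, map_zero] using R k (gen' k 1 * gen' k 1) (gen' k 1) (by simp [pathRel'])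
lemma e12 : E k 1 * E k 2 = 0 := by
  simpa only [map_mul, map_zero] using R k (gen' k 1 * gen' k 2) (0) (by simp [pathRel'])
lemma e20 : E k 2 * E k 0 = 0 := by
  simpa only [map_mul, map_zero] using R k (gen' k 2 * gen' k 0) (0) (by simp [pathRel'])
lemma e21 : E k 2 * E k 1 = 0 := by
  simpa only [map_mul, map_zero] using R k (gen' k 2 * gen' k 1) (0) (by simp [pathRel'])
lemma e22 : E k 2 * E k 2 = E k 2 := by
  simpa only [map_mul, map_zero] using R k (gen' k 2 * gen' k 2) (gen' k 2) (by simp [pathRel'])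
lemma hsum : E k 0 + E k 1 + E k 2 = 1 := by
  simpa only [map_add, map_one] using R k (gen' k 0 + gen' k 1 + gen' k 2) 1 (by simp [pathRel'])
lemma hd : E k 3 = E k 0 * E k 3 * E k 1 := by
  simpa only [map_mul] using R k (gen' k 3) (gen' k 0 * gen' k 3 * gen' k 1) (by simp [pathRel'])
lemma hg : E k 4 = E k 1 * E k 4 * E k 0 := by
  simpa only [map_mul] using R k (gen' k 4) (gen' k 1 * gen' k 4 * gen' k 0) (by simp [pathRel'])
lemma hh : E k 5 = E k 2 * E k 5 * E k 1 := by
  simpa only [map_mul] using R k (gen' k 5) (gen' k 2 * gen' k 5 * gen' k 1) (by simp [pathRel'])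
lemma ht : E k 6 = E k 0 * E k 6 * E k 2 := by
  simpa only [map_mul] using R k (gen' k 6) (gen' k 0 * gen' k 6 * gen' k 2) (by simp [pathRel'])
lemma r1 : E k 4 * E k 3 * E k 4 = 0 := by
  simpa only [map_mul, map_zero] using R k (gen' k 4 * gen' k 3 * gen' k 4) 0 (by simp [pathRel'])
lemma r2 : E k 5 * E k 4 = 0 := by
  simpa only [map_mul, map_zero] using R k (gen' k 5 * gen' k 4) 0 (by simp [pathRel'])
lemma r3 : E k 3 * E k 4 * E k 3 = E k 6 * E k 5 := by
  simpa only [map_mul] using R k (gen' k 3 * gen' k 4 * gen' k 3) (gen' k 6 * gen' k 5) (by simp [pathRel'])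
lemma r4 : E k 4 * E k 6 = 0 := by
  simpa only [map_mul, map_zero] using R k (gen' k 4 * gen' k 6) 0 (by simp [pathRel'])
lemma l03 : E k 0 * E k 3 = E k 3 := absL (e00 k) (hd k)
lemma l31 : E k 3 * E k 1 = E k 3 := absR (e11 k) (hd k)
lemma z30 : E k 3 * E k 0 = 0 := zeroR (e10 k) (hd k)
lemma z13 : E k 1 * E k 3 = 0 := zeroL (e10 k) (hd k)
lemma z23 : E k 2 * E k 3 = 0 := zeroL (e20 k) (hd k)
lemma z32 : E k 3 * E k 2 = 0 := zeroR (e12 k) (hd k)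
lemma l14 : E k 1 * E k 4 = E k 4 := absL (e11 k) (hg k)
lemma l40 : E k 4 * E k 0 = E k 4 := absR (e00 k) (hg k)
lemma z04 : E k 0 * E k 4 = 0 := zeroL (e01 k) (hg k)
lemma z41 : E k 4 * E k 1 = 0 := zeroR (e01 k) (hg k)
lemma z24 : E k 2 * E k 4 = 0 := zeroL (e21 k) (hg k)
lemma z42 : E k 4 * E k 2 = 0 := zeroR (e02 k) (hg k)
lemma l25 : E k 2 * E k 5 = E k 5 := absL (e22 k) (hh k)
lemma l51 : E k 5 * E k 1 = E k 5 := absR (e11 k) (hh k)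
lemma z05 : E k 0 * E k 5 = 0 := zeroL (e02 k) (hh k)
lemma z50 : E k 5 * E k 0 = 0 := zeroR (e10 k) (hh k)
lemma z15 : E k 1 * E k 5 = 0 := zeroL (e12 k) (hh k)
lemma z52 : E k 5 * E k 2 = 0 := zeroR (e12 k) (hh k)
lemma l06 : E k 0 * E k 6 = E k 6 := absL (e00 k) (ht k)
lemma l62 : E k 6 * E k 2 = E k 6 := absR (e22 k) (ht k)
lemma z60 : E k 6 * E k 0 = 0 := zeroR (e20 k) (ht k)
lemma z16 : E k 1 * E k 6 = 0 := zeroL (e10 k) (ht k)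
lemma z61 : E k 6 * E k 1 = 0 := zeroR (e21 k) (ht k)
lemma z26 : E k 2 * E k 6 = 0 := zeroL (e20 k) (ht k)
lemma z33 : E k 3 * E k 3 = 0 := zeroMM (l31 k) (l03 k) (e10 k)
lemma z35 : E k 3 * E k 5 = 0 := zeroMM (l31 k) (l25 k) (e12 k)
lemma z36 : E k 3 * E k 6 = 0 := zeroMM (l31 k) (l06 k) (e10 k)
lemma z44 : E k 4 * E k 4 = 0 := zeroMM (l40 k) (l14 k) (e01 k)
lemma z45 : E k 4 * E k 5 = 0 := zeroMM (l40 k) (l25 k) (e02 k)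
lemma z53 : E k 5 * E k 3 = 0 := zeroMM (l51 k) (l03 k) (e10 k)
lemma z55 : E k 5 * E k 5 = 0 := zeroMM (l51 k) (l25 k) (e12 k)
lemma z56 : E k 5 * E k 6 = 0 := zeroMM (l51 k) (l06 k) (e10 k)
lemma z63 : E k 6 * E k 3 = 0 := zeroMM (l62 k) (l03 k) (e20 k)
lemma z64 : E k 6 * E k 4 = 0 := zeroMM (l62 k) (l14 k) (e21 k)
lemma z66 : E k 6 * E k 6 = 0 := zeroMM (l62 k) (l06 k) (e20 k)
lemma e434 : E k 4 * (E k 3 * E k 4) = 0 := by rw [← mul_assoc]; exact r1 k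
lemma ext434 (x : pathAlg' k) : E k 4 * (E k 3 * (E k 4 * x)) = 0 := by
  rw [← mul_assoc, ← mul_assoc, r1 k, zero_mul]
lemma r3' : E k 6 * E k 5 = E k 3 * (E k 4 * E k 3) := by
  rw [← mul_assoc]; exact (r3 k).symm
lemma ext65 (x : pathAlg' k) : E k 6 * (E k 5 * x) = E k 3 * (E k 4 * (E k 3 * x)) := by
  rw [← mul_assoc, ← r3, mul_assoc, mul_assoc]

def v : Fin 10 → pathAlg' k
  | 0 => E k 0
  | 1 => E k 1
  | 2 => E k 2
  | 3 => E k 3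
  | 4 => E k 4
  | 5 => E k 5
  | 6 => E k 6
  | 7 => E k 3 * E k 4
  | 8 => E k 4 * E k 3
  | 9 => E k 3 * (E k 4 * E k 3)

lemma table : ∀ i j : Fin 10, v k i * v k j ∈ Submodule.span k (Set.range (v k)) := by
  have h0 : E k 0 ∈ Submodule.span k (Set.range (v k)) := Submodule.subset_span ⟨0, rfl⟩
  have h1 : E k 1 ∈ Submodule.span k (Set.range (v k)) := Submodule.subset_span ⟨1, rfl⟩
  have h2 : E k 2 ∈ Submodule.span k (Set.range (v k)) := Submodule.subset_span ⟨2, rfl⟩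
  have h3 : E k 3 ∈ Submodule.span k (Set.range (v k)) := Submodule.subset_span ⟨3, rfl⟩
  have h4 : E k 4 ∈ Submodule.span k (Set.range (v k)) := Submodule.subset_span ⟨4, rfl⟩
  have h5 : E k 5 ∈ Submodule.span k (Set.range (v k)) := Submodule.subset_span ⟨5, rfl⟩
  have h6 : E k 6 ∈ Submodule.span k (Set.range (v k)) := Submodule.subset_span ⟨6, rfl⟩
  have h7 : E k 3 * E k 4 ∈ Submodule.span k (Set.range (v k)) := Submodule.subset_span ⟨7, rfl⟩
  have h8 : E k 4 * E k 3 ∈ Submodule.span k (Set.range (v k)) := Submodule.subset_span ⟨8, rfl⟩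
  have h9 : E k 3 * (E k 4 * E k 3) ∈ Submodule.span k (Set.range (v k)) := Submodule.subset_span ⟨9, rfl⟩
  intro i j
  fin_cases i <;> fin_cases j <;> simp only [v] <;> (try simp only [e00 k, extm (e00 k), e01 k, extm0 (e01 k), e02 k, extm0 (e02 k), e10 k, extm0 (e10 k), e11 k, extm (e11 k), e12 k, extm0 (e12 k), e20 k, extm0 (e20 k), e21 k, extm0 (e21 k), e22 k, extm (e22 k), l03 k, extm (l03 k), l31 k, extm (l31 k), z30 k, extm0 (z30 k), z13 k, extm0 (z13 k), z23 k, extm0 (z23 k), z32 k, extm0 (z32 k), l14 k, extm (l14 k), l40 k, extm (l40 k), z04 k, extm0 (z04 k), z41 k, extm0 (z41 k), z24 k, extm0 (z24 k), z42 k, extm0 (z42 k), l25 k, extm (l25 k), l51 k, extm (l51 k), z05 k, extm0 (z05 k), z50 k, extm0 (z50 k), z15 k, extm0 (z15 k), z52 k, extm0 (z52 k), l06 k, extm (l06 k), l62 k, extm (l62 k), z60 k, extm0 (z60 k), z16 k, extm0 (z16 k), z61 k, extm0 (z61 k), z26 k, extm0 (z26 k), z33 k, extm0 (z33 k), z35 k,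 extm0 (z35 k), z36 k, extm0 (z36 k), z44 k, extm0 (z44 k), z45 k, extm0 (z45 k), z53 k, extm0 (z53 k), z55 k, extm0 (z55 k), z56 k, extm0 (z56 k), z63 k, extm0 (z63 k), z64 k, extm0 (z64 k), z66 k, extm0 (z66 k), r2 k, extm0 (r2 k), r4 k, extm0 (r4 k), e434 k, ext434 k, r3' k, ext65 k, mul_zero, zero_mul, mul_assoc]) <;>
    first
      | exact Submodule.zero_mem _
      | assumption

lemma span_top : ∀ x : pathAlg' k, x ∈ Submodule.span k (Set.range (v k)) := by
  have mulmem : ∀ x y : pathAlg' k, x ∈ Submodule.span k (Set.range (v k)) →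
      y ∈ Submodule.span k (Set.range (v k)) → x * y ∈ Submodule.span k (Set.range (v k)) := by
    intro x y hx hy
    have h := Submodule.mul_mem_mul hx hy
    rw [Submodule.span_mul_span] at h
    refine Submodule.span_le.mpr ?_ h
    rintro z ⟨a, ⟨i, rfl⟩, b, ⟨j, rfl⟩, rfl⟩
    exact table k i j
  intro x
  obtain ⟨y, rfl⟩ := RingQuot.mkAlgHom_surjective k (pathRel' k) x
  induction y using FreeAlgebra.induction with
  | grade0 r =>
      have h1 : (RingQuot.mkAlgHom k (pathRel' k)) (algebraMap k _ r) = r • (1 : pathAlg' k) := by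
        rw [AlgHom.commutes, Algebra.algebraMap_eq_smul_one]; rfl
      rw [h1, ← hsum k]
      exact Submodule.smul_mem _ _ (Submodule.add_mem _
        (Submodule.add_mem _ (Submodule.subset_span ⟨0, rfl⟩) (Submodule.subset_span ⟨1, rfl⟩))
        (Submodule.subset_span ⟨2, rfl⟩))
  | grade1 i =>
      fin_cases i
      · exact Submodule.subset_span ⟨0, rfl⟩
      · exact Submodule.subset_span ⟨1, rfl⟩
      · exact Submodule.subset_span ⟨2, rfl⟩
      · exact Submodule.subset_span ⟨3, rfl⟩
      · exact Submodule.subset_span ⟨4, rfl⟩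
      · exact Submodule.subset_span ⟨5, rfl⟩
      · exact Submodule.subset_span ⟨6, rfl⟩
  | mul a b ha hb => rw [map_mul]; exact mulmem _ _ ha hb
  | add a b ha hb => rw [map_add]; exact Submodule.add_mem _ ha hb

def φ : pathAlg' k →ₐ[k] Matrix (Fin 10) (Fin 10) k :=
  RingQuot.liftAlgHom k ⟨F k, hrel k⟩

lemma φE (i : Fin 7) : φ k (E k i) = gens k i := by
  show (RingQuot.liftAlgHom k ⟨F k, hrel k⟩) ((RingQuot.mkAlgHom k (pathRel' k)) (gen' k i)) = _
  rw [RingQuot.liftAlgHom_mkAlgHom_apply]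
  simp [F, gen', FreeAlgebra.lift_ι_apply]

def Nv : Fin 10 → Matrix (Fin 10) (Fin 10) ℤ
  | 0 => MZ 0 | 1 => MZ 1 | 2 => MZ 2 | 3 => MZ 3 | 4 => MZ 4 | 5 => MZ 5 | 6 => MZ 6
  | 7 => MZ 3 * MZ 4 | 8 => MZ 4 * MZ 3 | 9 => MZ 3 * (MZ 4 * MZ 3)

def jv : Fin 10 → Fin 10
  | 0 => 0 | 1 => 1 | 2 => 2 | 3 => 1 | 4 => 0 | 5 => 1 | 6 => 2 | 7 => 0 | 8 => 1 | 9 => 1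

lemma keyZ : ∀ i r : Fin 10, Nv i r (jv r) = if r = i then 1 else 0 := by decide

lemma φv : ∀ i : Fin 10, φ k (v k i) = castHom k (Nv i) := by
  intro i
  fin_cases i
  · exact (by simpa only [gens] using φE k 0 : _)
  · exact (by simpa only [gens] using φE k 1 : _)
  · exact (by simpa only [gens] using φE k 2 : _)
  · exact (by simpa only [gens] using φE k 3 : _)
  · exact (by simpa only [gens] using φE k 4 : _)
  · exact (by simpa only [gens] using φE k 5 : _)
  · exact (by simpa only [gens] using φE k 6 : _)
  · show φ k (E k 3 * E k 4) = castHom k (Nv 7)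
    rw [map_mul, φE k 3, φE k 4]
    simp only [gens, ← map_mul]
    rfl
  · show φ k (E k 4 * E k 3) = castHom k (Nv 8)
    rw [map_mul, φE k 4, φE k 3]
    simp only [gens, ← map_mul]
    rfl
  · show φ k (E k 3 * (E k 4 * E k 3)) = castHom k (Nv 9)
    rw [map_mul, map_mul, φE k 3, φE k 4]
    simp only [gens, ← map_mul]
    rfl

lemma indep : LinearIndependent k (v k) := by
  rw [Fintype.linearIndependent_iff]
  intro c hc i0
  have h1 : φ k (∑ i, c i • v k i) = 0 := by rw [hc, map_zero]
  rw [map_sum] at h1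
  simp only [map_smul, φv] at h1
  have h2 : (∑ i, c i • castHom k (Nv i)) i0 (jv i0) = (0 : Matrix (Fin 10) (Fin 10) k) i0 (jv i0) := by
    rw [h1]
  simp only [Matrix.sum_apply, Matrix.smul_apply, Matrix.zero_apply, RingHom.mapMatrix_apply,
    Matrix.map_apply, keyZ, smul_eq_mul, apply_ite (Int.castRingHom k), map_one, map_zero, Int.cast_ite, Int.cast_one, Int.cast_zero,
    mul_ite, mul_one, mul_zero, Finset.sum_ite_eq, Finset.mem_univ, if_true] at h2
  exact h2

def bas : Module.Basis (Fin 10) k (pathAlg' k) :=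
  Module.Basis.mk (indep k) (fun x _ => span_top k x)

theorem finrank_eq : Module.finrank k (pathAlg' k) = 10 := by
  rw [Module.finrank_eq_card_basis (bas k), Fintype.card_fin]

end Stmt13

/-- The algebra `B = kQ'/⟨ρ'⟩`, where `Q'` has vertices `I, II, III`
and arrows `δ : I → II`, `γ : II → I`, `η : II → III`, `θ : III → I`, with relations
`ρ' = {γδγ, ηγ, δγδ − θη, γθ}`, has `k`-dimension `10`. -/
theorem stmt_13 : Module.finrank k (pathAlg' k) = 10 := by
  exact Stmt13.finrank_eq k

end
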